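/- For the diagonal form Q = diag(−1,−3), the maximal squares cᵀQ⁻¹c of characteristic vectors in each of the 3 equivalence classes modulo 2Qℤ² are {−4, −4/3, −4/3}; for Q = [[−2,−1],[−1,−2]] they are {0, −8/3, −8/3}. -/

import Mathlib

open Matrix

/-- Square of a covector `c` with respect to `Q⁻¹` (over `ℚ`). -/
noncomputable def covSq (Q : Matrix (Fin 2) (Fin 2) ℤ) (c : Fin 2 → ℤ) : ℚ :=
  (fun i => (c i : ℚ)) ⬝ᵥ ((Q.map (Int.cast : ℤ → ℚ))⁻¹).mulVec (fun i => (c i : ℚ))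

/-- `c` is a characteristic vector for `Q`. -/
def IsCharVec (Q : Matrix (Fin 2) (Fin 2) ℤ) (c : Fin 2 → ℤ) : Prop :=
  ∀ i, c i ≡ Q i i [ZMOD 2]

/-- `c` and `c'` are equivalent modulo `2Qℤ²`. -/
def EquivMod2Q (Q : Matrix (Fin 2) (Fin 2) ℤ) (c c' : Fin 2 → ℤ) : Prop :=
  ∃ y : Fin 2 → ℤ, c' - c = (2 • Q).mulVec y

/-- `c` is a characteristic vector realizing the maximal square `v` of its
equivalence class modulo `2Qℤ²`. -/
noncomputable def MaxSq (Q : Matrix (Fin 2) (Fin 2) ℤ) (c : Fin 2 → ℤ) (v : ℚ) : Prop :=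
  IsCharVec Q c ∧ covSq Q c = v ∧
    ∀ c', IsCharVec Q c' → EquivMod2Q Q c c' → covSq Q c' ≤ v

/-!
Both forms have determinant `3`, so `covSq Q c = q(c) / 3` for the integral form
`q(c) = cᵀ adj(Q) c`, and `c ~ c'` iff `adj(Q) (c' - c) ∈ 6ℤ²`. For `diag(-1, -3)` the
characteristic vectors are the odd vectors, `-q(c) = 3c₀² + c₁² ≥ 4`, and the class of `c` is
determined by `c₁ mod 6 ∈ {1, 3, 5}`; in the class `c₁ ≡ 3` one has `|c₁| ≥ 3`, so `-q ≥ 12`.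
For `[[-2, -1], [-1, -2]]` the characteristic vectors are the `2(a, b)`, and `-q = 8(a² - ab + b²)`
is eight times the Eisenstein norm, hence at least `8` outside the class of `0`, the only class
containing `0`.
-/

theorem covSq_eq (Q : Matrix (Fin 2) (Fin 2) ℤ) (c : Fin 2 → ℤ) :
    covSq Q c =
      ((Q 1 1 * c 0 ^ 2 - (Q 0 1 + Q 1 0) * c 0 * c 1 + Q 0 0 * c 1 ^ 2 : ℤ) : ℚ) / Q.det := by
  rw [covSq, inv_def, adjugate_fin_two, det_fin_two, det_fin_two, vec2_dotProduct, mulVec_fin_two]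
  simp only [smul_of, of_apply, Pi.smul_apply, map_apply, cons_val_zero, cons_val_one,
    cons_val_fin_one, smul_eq_mul, Ring.inverse_eq_inv']
  push_cast
  ring

theorem equivMod2Q_iff_dvd_adjugate {Q : Matrix (Fin 2) (Fin 2) ℤ} (hQ : Q.det ≠ 0)
    (c c' : Fin 2 → ℤ) :
    EquivMod2Q Q c c' ↔ ∀ i, 2 * Q.det ∣ (Q.adjugate *ᵥ (c' - c)) i := by
  have adjugate_mulVec_two_smul (y : Fin 2 → ℤ) :
      Q.adjugate *ᵥ ((2 • Q) *ᵥ y) = (2 * Q.det) • y := by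
    rw [mulVec_mulVec, mul_smul_comm, adjugate_mul, smul_mulVec, smul_mulVec, one_mulVec]
    ext i; simp [mul_assoc]
  have mulVec_adjugate_mulVec (v : Fin 2 → ℤ) : Q *ᵥ (Q.adjugate *ᵥ v) = Q.det • v := by
    rw [mulVec_mulVec, mul_adjugate, smul_mulVec, one_mulVec]
  constructor
  · rintro ⟨y, hy⟩ i
    exact ⟨y i, by rw [hy, adjugate_mulVec_two_smul]; rfl⟩
  · intro h
    choose y hy using h
    refine ⟨y, smul_right_injective _ hQ ?_⟩
    dsimp only
    rw [← mulVec_adjugate_mulVec, ← mulVec_adjugate_mulVec ((2 • Q) *ᵥ y),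
      adjugate_mulVec_two_smul]
    exact congrArg _ (funext hy)

theorem maxSq_of_forall_le {Q : Matrix (Fin 2) (Fin 2) ℤ} {c : Fin 2 → ℤ} {v : ℚ}
    (hc : IsCharVec Q c) (hv : covSq Q c = v) (h : ∀ c', IsCharVec Q c' → covSq Q c' ≤ v) :
    MaxSq Q c v :=
  ⟨hc, hv, fun c' hc' _ ↦ h c' hc'⟩

theorem Int.one_le_sq_of_odd {x : ℤ} (hx : Odd x) : 1 ≤ x ^ 2 :=
  (one_le_sq_iff_one_le_abs x).mpr (Int.one_le_abs (by rintro rfl; simp at hx))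

theorem Int.one_le_sq_sub_mul_add_sq {a b : ℤ} (h : a ≠ 0 ∨ b ≠ 0) :
    1 ≤ a ^ 2 - a * b + b ^ 2 := by
  have : 0 < a ^ 2 + b ^ 2 := by
    rcases h with h | h <;> positivity
  nlinarith [sq_nonneg (a - b)]

local notation "Q₁" => (!![-1, 0; 0, -3] : Matrix (Fin 2) (Fin 2) ℤ)

section DiagonalForm

variable {c c' : Fin 2 → ℤ}

theorem covSq_Q₁ (c : Fin 2 → ℤ) : covSq Q₁ c = -(3 * c 0 ^ 2 + c 1 ^ 2) / 3 := by
  rw [covSq_eq, det_fin_two_of]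
  simp only [of_apply, cons_val_zero, cons_val_one, cons_val_fin_one]
  push_cast
  ring

theorem isCharVec_Q₁_iff : IsCharVec Q₁ c ↔ Odd (c 0) ∧ Odd (c 1) := by
  simp [IsCharVec, Fin.forall_fin_two, Int.ModEq, Int.odd_iff]

theorem equivMod2Q_Q₁_iff : EquivMod2Q Q₁ c c' ↔ 2 ∣ c' 0 - c 0 ∧ 6 ∣ c' 1 - c 1 := by
  rw [equivMod2Q_iff_dvd_adjugate (by simp [det_fin_two_of]), adjugate_fin_two_of, det_fin_two_of,
    Fin.forall_fin_two, mulVec_fin_two]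
  simp only [of_apply, cons_val_zero, cons_val_one, cons_val_fin_one, Pi.sub_apply,
    Int.reduceNeg, Int.reduceMul, Int.reduceSub]
  omega

theorem covSq_Q₁_le (hc : IsCharVec Q₁ c) : covSq Q₁ c ≤ -4 / 3 := by
  obtain ⟨h0, h1⟩ := isCharVec_Q₁_iff.mp hc
  have : (1 : ℚ) ≤ c 0 ^ 2 := by exact_mod_cast Int.one_le_sq_of_odd h0
  have : (1 : ℚ) ≤ c 1 ^ 2 := by exact_mod_cast Int.one_le_sq_of_odd h1
  rw [covSq_Q₁]
  linarith

theorem covSq_Q₁_le_of_three_dvd (hc : IsCharVec Q₁ c) (h3 : 3 ∣ c 1) : covSq Q₁ c ≤ -4 := by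
  obtain ⟨h0, h1⟩ := isCharVec_Q₁_iff.mp hc
  obtain ⟨k, hk⟩ := h3
  have : (1 : ℚ) ≤ c 0 ^ 2 := by exact_mod_cast Int.one_le_sq_of_odd h0
  have : (1 : ℚ) ≤ k ^ 2 := by exact_mod_cast Int.one_le_sq_of_odd (Int.odd_mul.mp (hk ▸ h1)).2
  rw [covSq_Q₁, hk]
  push_cast
  linarith

theorem equivMod2Q_Q₁_cases (hc : IsCharVec Q₁ c) :
    EquivMod2Q Q₁ ![1, 3] c ∨ EquivMod2Q Q₁ ![1, 1] c ∨ EquivMod2Q Q₁ ![1, -1] c := by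
  obtain ⟨h0, h1⟩ := isCharVec_Q₁_iff.mp hc
  rw [Int.odd_iff] at h0 h1
  simp only [equivMod2Q_Q₁_iff, cons_val_zero, cons_val_one]
  omega

theorem maxSq_Q₁_one_three : MaxSq Q₁ ![1, 3] (-4) := by
  refine ⟨isCharVec_Q₁_iff.mpr (by decide), by rw [covSq_Q₁]; norm_num, fun c hc hequiv ↦ ?_⟩
  refine covSq_Q₁_le_of_three_dvd hc ?_
  have := (equivMod2Q_Q₁_iff.mp hequiv).2
  simp only [cons_val_one, cons_val_zero] at this
  omega

end DiagonalForm

local notation "Q₂" => (!![-2, -1; -1, -2] : Matrix (Fin 2) (Fin 2) ℤ)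

section HexagonalForm

variable {c c' : Fin 2 → ℤ}

theorem covSq_Q₂ (c : Fin 2 → ℤ) : covSq Q₂ c = -2 * (c 0 ^ 2 - c 0 * c 1 + c 1 ^ 2) / 3 := by
  rw [covSq_eq, det_fin_two_of]
  simp only [of_apply, cons_val_zero, cons_val_one, cons_val_fin_one]
  push_cast
  ring

theorem isCharVec_Q₂_iff : IsCharVec Q₂ c ↔ 2 ∣ c 0 ∧ 2 ∣ c 1 := by
  simp [IsCharVec, Fin.forall_fin_two, Int.ModEq]

theorem equivMod2Q_Q₂_iff :
    EquivMod2Q Q₂ c c' ↔ 2 ∣ c' 0 - c 0 ∧ 2 ∣ c' 1 - c 1 ∧ 6 ∣ (c' 0 - c 0) + (c' 1 - c 1) := by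
  rw [equivMod2Q_iff_dvd_adjugate (by simp [det_fin_two_of]), adjugate_fin_two_of, det_fin_two_of,
    Fin.forall_fin_two, mulVec_fin_two]
  simp only [of_apply, cons_val_zero, cons_val_one, cons_val_fin_one, Pi.sub_apply,
    Int.reduceNeg, Int.reduceMul, Int.reduceSub]
  omega

theorem covSq_Q₂_nonpos (c : Fin 2 → ℤ) : covSq Q₂ c ≤ 0 := by
  rw [covSq_Q₂]
  nlinarith [sq_nonneg ((c 0 : ℚ) - c 1), sq_nonneg (c 0 : ℚ), sq_nonneg (c 1 : ℚ)]

theorem covSq_Q₂_le_of_ne_zero (hc : IsCharVec Q₂ c) (hc0 : c ≠ 0) : covSq Q₂ c ≤ -8 / 3 := by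
  obtain ⟨⟨a, ha⟩, ⟨b, hb⟩⟩ := isCharVec_Q₂_iff.mp hc
  have hab : a ≠ 0 ∨ b ≠ 0 := by
    by_contra! hab
    exact hc0 (by ext i; fin_cases i <;> simp [ha, hb, hab])
  have : (1 : ℚ) ≤ a ^ 2 - a * b + b ^ 2 := by
    exact_mod_cast Int.one_le_sq_sub_mul_add_sq hab
  rw [covSq_Q₂, ha, hb]
  push_cast
  linarith

theorem equivMod2Q_Q₂_cases (hc : IsCharVec Q₂ c) :
    EquivMod2Q Q₂ 0 c ∨ EquivMod2Q Q₂ ![2, 0] c ∨ EquivMod2Q Q₂ ![-2, 0] c := by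
  obtain ⟨h0, h1⟩ := isCharVec_Q₂_iff.mp hc
  simp only [equivMod2Q_Q₂_iff, cons_val_zero, cons_val_one, Pi.zero_apply]
  omega

theorem maxSq_Q₂_of_not_equivMod2Q_zero (hc : IsCharVec Q₂ c) (hv : covSq Q₂ c = -8 / 3)
    (h0 : ¬ EquivMod2Q Q₂ c 0) : MaxSq Q₂ c (-8 / 3) :=
  ⟨hc, hv, fun _ hc' hequiv ↦ covSq_Q₂_le_of_ne_zero hc' (by rintro rfl; exact h0 hequiv)⟩

end HexagonalForm

/-- The maximal squares of characteristic vectors in the 3 classes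
modulo `2Qℤ²` are `{−4, −4/3, −4/3}` for `Q = diag(−1,−3)` and
`{0, −8/3, −8/3}` for `Q = [[−2,−1],[−1,−2]]`. -/
theorem stmt_16 :
    (∃ c₀ c₁ c₂ : Fin 2 → ℤ,
      MaxSq !![-1, 0; 0, -3] c₀ (-4) ∧
      MaxSq !![-1, 0; 0, -3] c₁ (-4/3) ∧
      MaxSq !![-1, 0; 0, -3] c₂ (-4/3) ∧
      ¬ EquivMod2Q !![-1, 0; 0, -3] c₀ c₁ ∧
      ¬ EquivMod2Q !![-1, 0; 0, -3] c₀ c₂ ∧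
      ¬ EquivMod2Q !![-1, 0; 0, -3] c₁ c₂ ∧
      ∀ c, IsCharVec !![-1, 0; 0, -3] c →
        EquivMod2Q !![-1, 0; 0, -3] c₀ c ∨ EquivMod2Q !![-1, 0; 0, -3] c₁ c ∨
          EquivMod2Q !![-1, 0; 0, -3] c₂ c) ∧
    (∃ c₀ c₁ c₂ : Fin 2 → ℤ,
      MaxSq !![-2, -1; -1, -2] c₀ 0 ∧
      MaxSq !![-2, -1; -1, -2] c₁ (-8/3) ∧
      MaxSq !![-2, -1; -1, -2] c₂ (-8/3) ∧
      ¬ EquivMod2Q !![-2, -1; -1, -2] c₀ c₁ ∧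
      ¬ EquivMod2Q !![-2, -1; -1, -2] c₀ c₂ ∧
      ¬ EquivMod2Q !![-2, -1; -1, -2] c₁ c₂ ∧
      ∀ c, IsCharVec !![-2, -1; -1, -2] c →
        EquivMod2Q !![-2, -1; -1, -2] c₀ c ∨ EquivMod2Q !![-2, -1; -1, -2] c₁ c ∨
          EquivMod2Q !![-2, -1; -1, -2] c₂ c) := by
  constructor
  · refine ⟨![1, 3], ![1, 1], ![1, -1], maxSq_Q₁_one_three, ?_, ?_, ?_, ?_, ?_,
      fun _ ↦ equivMod2Q_Q₁_cases⟩
    · exact maxSq_of_forall_le (isCharVec_Q₁_iff.mpr (by decide)) (by rw [covSq_Q₁]; norm_num)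
        fun _ ↦ covSq_Q₁_le
    · exact maxSq_of_forall_le (isCharVec_Q₁_iff.mpr (by decide)) (by rw [covSq_Q₁]; norm_num)
        fun _ ↦ covSq_Q₁_le
    all_goals norm_num [equivMod2Q_Q₁_iff]
  · refine ⟨0, ![2, 0], ![-2, 0], ?_, ?_, ?_, ?_, ?_, ?_, fun _ ↦ equivMod2Q_Q₂_cases⟩
    · exact maxSq_of_forall_le (isCharVec_Q₂_iff.mpr (by simp)) (by rw [covSq_Q₂]; simp)
        fun c _ ↦ covSq_Q₂_nonpos c
    · exact maxSq_Q₂_of_not_equivMod2Q_zero (by norm_num [isCharVec_Q₂_iff])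
        (by rw [covSq_Q₂]; norm_num) (by norm_num [equivMod2Q_Q₂_iff])
    · exact maxSq_Q₂_of_not_equivMod2Q_zero (by norm_num [isCharVec_Q₂_iff])
        (by rw [covSq_Q₂]; norm_num) (by norm_num [equivMod2Q_Q₂_iff])
    all_goals norm_num [equivMod2Q_Q₂_iff]
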